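/- arXiv:2101.01982 — 2 statements merged into one kernel-verified Lean document; each statement's English description precedes it below -/
import Mathlib

section
/- Let c ∈ [0,1/2] and x ∈ ℚ ∩ [c,1]. Suppose there exists ω ∈ {0,1}^ℕ such that T_ω^n(x) ∉ S for all n ≥ 0. Then x has a unique c-Lüroth expansion, i.e. the sequence ((s_n(ω',x), d_n(ω',x)))_{n≥1} is the same for all ω' ∈ {0,1}^ℕ, and this sequence is ultimately periodic. -/
/-! Each branch `[z_n, z_{n-1})` is mapped by `T_L` affinely onto `[0,1)`, sending `z_n⁺` to `c`
and `z_{n-1}⁻` to `1 - c`. So on `[c,1]` both maps `T_{j,c}` are `T_A` when `T_L y < c` and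
`T_L` when `T_L y > 1 - c`, and they can only disagree on the switch region. Off it the random
orbit of `x` is therefore the orbit of a single map, which keeps the denominator of a rational
`x` and stays in `[c,1]`, hence visits finitely many points and is ultimately periodic. For
`c = 0` the hypothesis fails: the switch region is `(0,1]` and `T_{j,0}` sends `0` to `1`. -/

open MeasureTheory Filter Set
open scoped Classical ENNReal

noncomputable section

/-- The Lüroth map `T_L`. -/
def TL (x : ℝ) : ℝ :=
  if x = 0 then 0
  else if x = 1 then 1
  else (⌈1/x⌉ : ℝ) * ((⌈1/x⌉ : ℝ) - 1) * x - ((⌈1/x⌉ : ℝ) - 1)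

/-- The alternating Lüroth map `T_A`. -/
def TA (x : ℝ) : ℝ := 1 - TL x

/-- `z_n⁺ = z_n + c·z_n·z_{n-1}`. -/
def zp (c : ℝ) (n : ℕ) : ℝ := 1/(n:ℝ) + c * (1/(n:ℝ)) * (1/((n:ℝ) - 1))

/-- `z_n⁻ = z_n − c·z_n·z_{n+1}`. -/
def zm (c : ℝ) (n : ℕ) : ℝ := 1/(n:ℝ) - c * (1/(n:ℝ)) * (1/((n:ℝ) + 1))

/-- The maps `T_{0,c}` (`j = false`) and `T_{1,c}` (`j = true`); for `c = 0` the points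
`0` and `z_n`, `n ≥ 2`, are additionally sent to `1`. -/
def Tc (j : Bool) (c : ℝ) (x : ℝ) : ℝ :=
  if c = 0 ∧ (x = 0 ∨ ∃ n : ℕ, 2 ≤ n ∧ x = 1/(n:ℝ)) then 1
  else if x = 1 then 1
  else if (j = false ∧ ∃ n : ℕ, 2 ≤ n ∧ 1/(n:ℝ) ≤ x ∧ x < zp c n) ∨
          (j = true ∧ ∃ n : ℕ, 2 ≤ n ∧ 1/(n:ℝ) ≤ x ∧ x ≤ zm c (n-1)) then TA x
  else TL x

/-- Random iteration: `Tom c ω n = T_{ω_n,c} ∘ ⋯ ∘ T_{ω_1,c}` (paths 0-indexed). -/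
def Tom (c : ℝ) (ω : ℕ → Bool) : ℕ → ℝ → ℝ
  | 0 => fun x => x
  | n+1 => fun x => Tc (ω n) c (Tom c ω n x)

/-- The digit `d_{n+1}(ω,x)` (0-indexed: `dig c ω x n` is the digit determined by `T_ω^n x`). -/
def dig (c : ℝ) (ω : ℕ → Bool) (x : ℝ) (n : ℕ) : ℕ :=
  if Tom c ω n x = 1 then 2 else (⌈1/(Tom c ω n x)⌉).toNat

/-- The switch region `S = [c,1] ∩ ⋃_{n≥2} [z_n⁺, z_{n-1}⁻]`. -/
def SwitchS (c : ℝ) : Set ℝ :=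
  {y | y ∈ Set.Icc c 1 ∧ ∃ n : ℕ, 2 ≤ n ∧ zp c n ≤ y ∧ y ≤ zm c (n-1)}

/-- The sign `s_{n+1}(ω,x)` (0-indexed: `sgn c ω x n` is the sign determined by `T_ω^n x`). -/
def sgn (c : ℝ) (ω : ℕ → Bool) (x : ℝ) (n : ℕ) : ℕ :=
  if c = 0 then (if ω n then 1 else 0)
  else if (ω n = false ∧ Tom c ω n x ∈ SwitchS c) ∨
          (∃ d : ℕ, 1 ≤ d ∧ zm c d < Tom c ω n x ∧ Tom c ω n x < 1/(d:ℝ)) ∨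
          Tom c ω n x = 1 then 0
  else 1

/-- The c-Lüroth expansion: `expansion c ω x n = (s_{n+1}(ω,x), d_{n+1}(ω,x))`. -/
def expansion (c : ℝ) (ω : ℕ → Bool) (x : ℝ) (n : ℕ) : ℕ × ℕ :=
  (sgn c ω x n, dig c ω x n)

/-- A sequence is ultimately periodic if some tail is periodic. -/
def UltimatelyPeriodic {α : Type*} (a : ℕ → α) : Prop :=
  ∃ N r : ℕ, 1 ≤ r ∧ ∀ n, N ≤ n → a (n + r) = a n

/-- The `n`-th convergent `p_n/q_n(ω,x)`. -/
def conv (c : ℝ) (ω : ℕ → Bool) (x : ℝ) (n : ℕ) : ℝ :=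
  ∑ k ∈ Finset.range n,
    (-1 : ℝ) ^ (∑ i ∈ Finset.range k, sgn c ω x i) *
      ((dig c ω x k : ℝ) - 1 + (sgn c ω x k : ℝ)) /
      (∏ i ∈ Finset.range (k+1), ((dig c ω x i : ℝ) * ((dig c ω x i : ℝ) - 1)))

/-- The value `Σ_{n≥1} (−1)^{s_1+⋯+s_{n−1}} (d_n − 1 + s_n)/∏_{i≤n} d_i(d_i−1)` of a
sign-digit sequence (0-indexed). -/
def lurothSum (a : ℕ → ℕ × ℕ) : ℝ :=
  ∑' n : ℕ,
    (-1 : ℝ) ^ (∑ i ∈ Finset.range n, (a i).1) *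
      (((a n).2 : ℝ) - 1 + ((a n).1 : ℝ)) /
      (∏ i ∈ Finset.range (n+1), (((a i).2 : ℝ) * (((a i).2 : ℝ) - 1)))

/-- The Bernoulli `(p, 1-p)` product measure on `{0,1}^ℕ` (coordinate `0 ↔ false` has
probability `p`). -/
def IsBernoulli (p : ℝ) (m : Measure (ℕ → Bool)) : Prop :=
  IsProbabilityMeasure m ∧
  ∀ (n : ℕ) (f : Fin n → Bool),
    m {ω : ℕ → Bool | ∀ i : Fin n, ω i = f i} =
      ∏ i : Fin n, ENNReal.ofReal (if f i then 1 - p else p)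

/-- The random 0-Lüroth transformation `L_0`. -/
def L0 (q : (ℕ → Bool) × ℝ) : (ℕ → Bool) × ℝ := (fun n => q.1 (n+1), Tc (q.1 0) 0 q.2)

/-- The `n`-th approximation coefficient `θ_n(ω,x)` (1-indexed `n`). -/
def theta (ω : ℕ → Bool) (x : ℝ) (n : ℕ) : ℝ :=
  ((dig 0 ω x (n-1) : ℝ) - (sgn 0 ω x (n-1) : ℝ)) *
    (∏ i ∈ Finset.range (n-1), ((dig 0 ω x i : ℝ) * ((dig 0 ω x i : ℝ) - 1))) *
    |x - conv 0 ω x n|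

/-- Distribution function `F_L` of the Lüroth approximation coefficients. -/
def FL (y : ℝ) : ℝ := (∑ k ∈ Finset.Icc 2 (⌊1/y⌋₊ + 1), y / (k:ℝ)) + 1/((⌊1/y⌋₊ : ℝ) + 1)

/-- Distribution function `F_A` of the alternating Lüroth approximation coefficients. -/
def FA (y : ℝ) : ℝ := (∑ k ∈ Finset.Icc 2 ⌊1/y⌋₊, y / ((k:ℝ) - 1)) + 1/(⌊1/y⌋₊ : ℝ)

/-- A sequence over the alphabet `A` is universal if every finite word over `A` occurs
in it as a consecutive block. -/
def IsUniversal (A : Set (ℕ × ℕ)) (e : ℕ → ℕ × ℕ) : Prop :=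
  ∀ (m : ℕ) (w : Fin m → ℕ × ℕ), (∀ i, w i ∈ A) →
    ∃ k : ℕ, ∀ i : Fin m, e (k + (i : ℕ)) = w i

/-- `c`-Lüroth admissible sequences. -/
def Admissible (c : ℝ) (a : ℕ → ℕ × ℕ) : Prop :=
  (∀ n, (a n).1 ≤ 1 ∧ 2 ≤ (a n).2 ∧ (a n).2 ≤ ⌈1/c⌉₊) ∧
  (∀ k : ℕ, lurothSum (fun n => a (k + n)) ∈ Set.Icc c 1) ∧
  ¬ ∃ (N d : ℕ), 2 ≤ d ∧ d < ⌈1/c⌉₊ ∧ a N = (0, d+1) ∧ ∀ n, N < n → a n = (0, 2)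

section Branch

variable {c y : ℝ} {n : ℕ}

lemma branch_index_eq_ceil (hn : 2 ≤ n) (hy : y ∈ Ico (1 / (n : ℝ)) (1 / ((n : ℝ) - 1))) :
    ⌈1 / y⌉ = n := by
  have hN : (2 : ℝ) ≤ n := by exact_mod_cast hn
  have hy0 : 0 < y := lt_of_lt_of_le (by positivity) hy.1
  have h1 := hy.1
  have h2 := hy.2
  rw [div_le_iff₀ (by linarith)] at h1
  rw [lt_div_iff₀ (by linarith)] at h2
  rw [Int.ceil_eq_iff, Int.cast_natCast, lt_div_iff₀ hy0, div_le_iff₀ hy0]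
  constructor <;> nlinarith

lemma exists_mem_branch (hy0 : 0 < y) (hy1 : y < 1) :
    ∃ n : ℕ, 2 ≤ n ∧ y ∈ Ico (1 / (n : ℝ)) (1 / ((n : ℝ) - 1)) := by
  have hinv : 1 < 1 / y := by rwa [lt_div_iff₀ hy0, one_mul]
  have h2 : 2 ≤ ⌈1 / y⌉₊ := Nat.lt_ceil.mpr (by exact_mod_cast hinv)
  have hN1 : (1 : ℝ) < ⌈1 / y⌉₊ := by exact_mod_cast h2
  have hle : 1 / y ≤ ⌈1 / y⌉₊ := Nat.le_ceil _
  have hlt : (⌈1 / y⌉₊ : ℝ) < 1 / y + 1 := Nat.ceil_lt_add_one (by positivity)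
  refine ⟨⌈1 / y⌉₊, h2, ?_, ?_⟩
  · rwa [div_le_iff₀ (by linarith), ← div_le_iff₀' hy0]
  · rwa [lt_div_iff₀ (by linarith), ← lt_div_iff₀' hy0, sub_lt_iff_lt_add]

lemma ne_one_of_mem_branch (hn : 2 ≤ n) (hy : y ∈ Ico (1 / (n : ℝ)) (1 / ((n : ℝ) - 1))) :
    y ≠ 1 := by
  have hN : (2 : ℝ) ≤ n := by exact_mod_cast hn
  exact (hy.2.trans_le (by rw [div_le_one (by linarith)]; linarith)).ne

lemma TL_eq_of_mem_branch (hn : 2 ≤ n) (hy : y ∈ Ico (1 / (n : ℝ)) (1 / ((n : ℝ) - 1))) :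
    TL y = n * (n - 1) * y - (n - 1) := by
  have hy0 : y ≠ 0 := (lt_of_lt_of_le (by positivity) hy.1).ne'
  rw [TL, if_neg hy0, if_neg (ne_one_of_mem_branch hn hy), branch_index_eq_ceil hn hy,
    Int.cast_natCast]

lemma branch_map_zp (hn : 2 ≤ n) : (n : ℝ) * (n - 1) * zp c n - (n - 1) = c := by
  have hN : (2 : ℝ) ≤ n := by exact_mod_cast hn
  rw [zp]
  field_simp [show (n : ℝ) - 1 ≠ 0 by linarith]
  ring

lemma branch_map_zm (hn : 2 ≤ n) : (n : ℝ) * (n - 1) * zm c (n - 1) - (n - 1) = 1 - c := by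
  have hN : (2 : ℝ) ≤ n := by exact_mod_cast hn
  rw [zm, Nat.cast_pred (by omega)]
  field_simp [show (n : ℝ) - 1 ≠ 0 by linarith, show (n : ℝ) ≠ 0 by linarith]
  ring

lemma branch_map_strictMono (hn : 2 ≤ n) :
    StrictMono fun y : ℝ => (n : ℝ) * (n - 1) * y - (n - 1) := by
  have hN : (2 : ℝ) ≤ n := by exact_mod_cast hn
  intro a b hab
  have hpos : 0 < (n : ℝ) * (n - 1) := by nlinarith
  simpa using mul_lt_mul_of_pos_left hab hpos

lemma branch_map_left (hn : 2 ≤ n) : (n : ℝ) * (n - 1) * (1 / n) - (n - 1) = 0 := by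
  have hN : (2 : ℝ) ≤ n := by exact_mod_cast hn
  field_simp
  ring

lemma branch_map_right (hn : 2 ≤ n) : (n : ℝ) * (n - 1) * (1 / (n - 1)) - (n - 1) = 1 := by
  have hN : (2 : ℝ) ≤ n := by exact_mod_cast hn
  field_simp [show (n : ℝ) - 1 ≠ 0 by linarith]
  ring

lemma TL_mem_Ico_of_mem_branch (hn : 2 ≤ n)
    (hy : y ∈ Ico (1 / (n : ℝ)) (1 / ((n : ℝ) - 1))) : TL y ∈ Ico 0 1 := by
  have h1 := (branch_map_strictMono hn).monotone hy.1
  have h2 := branch_map_strictMono hn hy.2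
  simp only [branch_map_left hn, branch_map_right hn] at h1 h2
  rw [TL_eq_of_mem_branch hn hy]
  exact ⟨h1, h2⟩

lemma zp_lt_one_div_pred (hc : c < 1) (hn : 2 ≤ n) : zp c n < 1 / ((n : ℝ) - 1) := by
  rw [← (branch_map_strictMono hn).lt_iff_lt]
  simpa only [branch_map_zp hn, branch_map_right hn] using hc

lemma zm_lt_one_div_pred (hc : 0 < c) (hn : 2 ≤ n) : zm c (n - 1) < 1 / ((n : ℝ) - 1) := by
  rw [← (branch_map_strictMono hn).lt_iff_lt]
  simp only [branch_map_zm hn, branch_map_right hn]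
  linarith

lemma lt_zp_iff_TL_lt (hn : 2 ≤ n) (hy : y ∈ Ico (1 / (n : ℝ)) (1 / ((n : ℝ) - 1))) :
    y < zp c n ↔ TL y < c := by
  rw [TL_eq_of_mem_branch hn hy, ← (branch_map_strictMono hn).lt_iff_lt, branch_map_zp hn]

lemma le_zm_iff_TL_le (hn : 2 ≤ n) (hy : y ∈ Ico (1 / (n : ℝ)) (1 / ((n : ℝ) - 1))) :
    y ≤ zm c (n - 1) ↔ TL y ≤ 1 - c := by
  rw [TL_eq_of_mem_branch hn hy, ← (branch_map_strictMono hn).le_iff_le, branch_map_zm hn]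

lemma Tc_one (j : Bool) (c : ℝ) : Tc j c 1 = 1 := by
  simp [Tc]

lemma branch_index_unique {m : ℕ} (hm : 2 ≤ m) (hn : 2 ≤ n)
    (hym : y ∈ Ico (1 / (m : ℝ)) (1 / ((m : ℝ) - 1)))
    (hyn : y ∈ Ico (1 / (n : ℝ)) (1 / ((n : ℝ) - 1))) : m = n := by
  exact_mod_cast (branch_index_eq_ceil hm hym).symm.trans (branch_index_eq_ceil hn hyn)

lemma Tc_false_eq (hc : 0 < c) (hc1 : c < 1) (hn : 2 ≤ n)
    (hy : y ∈ Ico (1 / (n : ℝ)) (1 / ((n : ℝ) - 1))) :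
    Tc false c y = if TL y < c then TA y else TL y := by
  have hbranch : (∃ m : ℕ, 2 ≤ m ∧ 1 / (m : ℝ) ≤ y ∧ y < zp c m) ↔ TL y < c := by
    rw [← lt_zp_iff_TL_lt hn hy]
    constructor
    · rintro ⟨m, hm, hym⟩
      obtain rfl :=
        branch_index_unique hm hn ⟨hym.1, hym.2.trans (zp_lt_one_div_pred hc1 hm)⟩ hy
      exact hym.2
    · exact fun h => ⟨n, hn, hy.1, h⟩
  simp only [Tc, hc.ne', ne_one_of_mem_branch hn hy, false_and, if_false, Bool.false_eq_true,
    true_and, or_false, hbranch]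

lemma Tc_true_eq (hc : 0 < c) (hn : 2 ≤ n) (hy : y ∈ Ico (1 / (n : ℝ)) (1 / ((n : ℝ) - 1))) :
    Tc true c y = if TL y ≤ 1 - c then TA y else TL y := by
  have hbranch : (∃ m : ℕ, 2 ≤ m ∧ 1 / (m : ℝ) ≤ y ∧ y ≤ zm c (m - 1)) ↔ TL y ≤ 1 - c := by
    rw [← le_zm_iff_TL_le hn hy]
    constructor
    · rintro ⟨m, hm, hym⟩
      obtain rfl :=
        branch_index_unique hm hn ⟨hym.1, hym.2.trans_lt (zm_lt_one_div_pred hc hm)⟩ hy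
      exact hym.2
    · exact fun h => ⟨n, hn, hy.1, h⟩
  simp only [Tc, hc.ne', ne_one_of_mem_branch hn hy, false_and, if_false, Bool.true_eq_false,
    true_and, false_or, hbranch]

end Branch

section Switch

variable {c y : ℝ}

lemma Tc_mem_Icc (hc : 0 < c) (hc2 : c ≤ 1 / 2) (j : Bool) (hy : y ∈ Icc c 1) :
    Tc j c y ∈ Icc c 1 := by
  rcases hy.2.eq_or_lt with rfl | hy1
  · rw [Tc_one]
    exact ⟨hy.1, le_rfl⟩
  obtain ⟨n, hn, hyn⟩ := exists_mem_branch (hc.trans_le hy.1) hy1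
  obtain ⟨ht0, ht1⟩ := TL_mem_Ico_of_mem_branch hn hyn
  cases j
  · rw [Tc_false_eq hc (by linarith) hn hyn]
    split_ifs <;> simp only [TA, mem_Icc] <;> constructor <;> linarith
  · rw [Tc_true_eq hc hn hyn]
    split_ifs <;> simp only [TA, mem_Icc] <;> constructor <;> linarith

lemma Tc_eq_Tc_false (hc : 0 < c) (hc2 : c ≤ 1 / 2) (hy : y ∈ Icc c 1) (hyS : y ∉ SwitchS c)
    (j : Bool) : Tc j c y = Tc false c y := by
  rcases hy.2.eq_or_lt with rfl | hy1
  · rw [Tc_one, Tc_one]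
  obtain ⟨n, hn, hyn⟩ := exists_mem_branch (hc.trans_le hy.1) hy1
  have hout : TL y < c ∨ 1 - c < TL y := by
    by_contra! h
    rw [← not_lt, ← lt_zp_iff_TL_lt hn hyn, not_lt, ← le_zm_iff_TL_le hn hyn] at h
    exact hyS ⟨hy, n, hn, h⟩
  cases j
  · rfl
  rw [Tc_true_eq hc hn hyn, Tc_false_eq hc (by linarith) hn hyn]
  rcases hout with h | h
  · rw [if_pos h, if_pos (by linarith)]
  · rw [if_neg (by linarith), if_neg (by linarith)]

lemma mem_switchS_zero (hy : y ∈ Ioc 0 1) : y ∈ SwitchS 0 := by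
  refine ⟨⟨hy.1.le, hy.2⟩, ?_⟩
  rcases hy.2.eq_or_lt with rfl | hy1
  · exact ⟨2, le_rfl, by norm_num [zp], by norm_num [zm]⟩
  obtain ⟨n, hn, hyn⟩ := exists_mem_branch hy.1 hy1
  refine ⟨n, hn, by simpa [zp] using hyn.1, ?_⟩
  simpa [zm, Nat.cast_pred (by omega : 0 < n)] using hyn.2.le

lemma exists_Tom_zero_mem_switchS (ω : ℕ → Bool) {x : ℝ} (hx : x ∈ Icc 0 1) :
    ∃ n, Tom 0 ω n x ∈ SwitchS 0 := by
  rcases hx.1.eq_or_lt with rfl | hx0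
  · refine ⟨1, mem_switchS_zero ?_⟩
    simp [Tom, Tc]
  · exact ⟨0, mem_switchS_zero ⟨hx0, hx.2⟩⟩

end Switch

section Orbit

variable {c x : ℝ} {ω : ℕ → Bool}

lemma Tom_succ_apply (n : ℕ) : Tom c ω (n + 1) x = Tc (ω n) c (Tom c ω n x) := rfl

lemma Tom_mem_Icc (hc : 0 < c) (hc2 : c ≤ 1 / 2) (hx : x ∈ Icc c 1) (n : ℕ) :
    Tom c ω n x ∈ Icc c 1 := by
  induction n with
  | zero => exact hx
  | succ n ih => exact Tc_mem_Icc hc hc2 _ ih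

lemma Tom_const_apply (j : Bool) (n : ℕ) : Tom c (fun _ => j) n x = (Tc j c)^[n] x := by
  induction n with
  | zero => rfl
  | succ n ih => rw [Tom_succ_apply, ih, Function.iterate_succ_apply']

lemma Tom_eq_of_forall_not_mem_switchS (hc : 0 < c) (hc2 : c ≤ 1 / 2)
    (hx : x ∈ Icc c 1) (hω : ∀ n, Tom c ω n x ∉ SwitchS c) (ω' : ℕ → Bool) (n : ℕ) :
    Tom c ω' n x = Tom c ω n x := by
  induction n with
  | zero => rfl
  | succ n ih =>
    have hstep (j : Bool) : Tc j c (Tom c ω n x) = Tc false c (Tom c ω n x) :=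
      Tc_eq_Tc_false hc hc2 (Tom_mem_Icc hc hc2 hx n) (hω n) j
    rw [Tom_succ_apply, Tom_succ_apply, ih, hstep (ω' n), hstep (ω n)]

end Orbit

section Lattice

variable {G : AddSubgroup ℝ}

lemma TL_mem_addSubgroup (h1 : (1 : ℝ) ∈ G) {y : ℝ} (hy : y ∈ G) : TL y ∈ G := by
  have hint (k : ℤ) : (k : ℝ) ∈ G := by simpa using G.zsmul_mem h1 k
  unfold TL
  split_ifs
  · exact G.zero_mem
  · exact h1
  · have := G.sub_mem (G.zsmul_mem hy (⌈1 / y⌉ * (⌈1 / y⌉ - 1))) (hint (⌈1 / y⌉ - 1))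
    simpa [zsmul_eq_mul] using this

lemma Tc_mem_addSubgroup (h1 : (1 : ℝ) ∈ G) (j : Bool) (c : ℝ) {y : ℝ} (hy : y ∈ G) :
    Tc j c y ∈ G := by
  unfold Tc TA
  split_ifs
  · exact h1
  · exact h1
  · exact G.sub_mem h1 (TL_mem_addSubgroup h1 hy)
  · exact TL_mem_addSubgroup h1 hy

lemma Tom_mem_addSubgroup (h1 : (1 : ℝ) ∈ G) (c : ℝ) (ω : ℕ → Bool) {x : ℝ}
    (hx : x ∈ G) (n : ℕ) : Tom c ω n x ∈ G := by
  induction n with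
  | zero => exact hx
  | succ n ih => exact Tc_mem_addSubgroup h1 _ c ih

lemma finite_zmultiples_inter_Icc {a : ℝ} (ha : 0 < a) :
    ((AddSubgroup.zmultiples a : Set ℝ) ∩ Icc 0 1).Finite := by
  refine ((Set.finite_Icc (0 : ℤ) ⌈a⁻¹⌉).image fun k : ℤ => k • a).subset ?_
  rintro _ ⟨⟨k, rfl⟩, hk0, hk1⟩
  simp only [zsmul_eq_mul] at hk0 hk1
  refine ⟨k, ⟨?_, ?_⟩, rfl⟩
  · exact_mod_cast nonneg_of_mul_nonneg_left hk0 ha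
  · have : (k : ℝ) ≤ a⁻¹ := by rwa [← one_div, le_div_iff₀ ha]
    exact_mod_cast this.trans (Int.le_ceil _)

lemma rat_mem_zmultiples_inv_den (q : ℚ) :
    (q : ℝ) ∈ AddSubgroup.zmultiples ((q.den : ℝ)⁻¹) :=
  ⟨q.num, by simp only [zsmul_eq_mul, Rat.cast_def, div_eq_mul_inv]⟩

end Lattice

lemma expansion_eq_of_Tom_eq {c x₁ x₂ : ℝ} {ω₁ ω₂ : ℕ → Bool} {n₁ n₂ : ℕ} (hc : c ≠ 0)
    (h : Tom c ω₁ n₁ x₁ = Tom c ω₂ n₂ x₂) (hS : Tom c ω₂ n₂ x₂ ∉ SwitchS c) :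
    expansion c ω₁ x₁ n₁ = expansion c ω₂ x₂ n₂ := by
  simp [expansion, sgn, dig, hc, h, hS]

section UltimatelyPeriodic

variable {α β : Type*}

lemma ultimatelyPeriodic_iterate_of_finite {f : α → α} {x : α} {s : Set α} (hs : s.Finite)
    (hx : ∀ n, f^[n] x ∈ s) : UltimatelyPeriodic fun n => f^[n] x := by
  obtain ⟨a, b, hab, he⟩ := hs.exists_lt_map_eq_of_forall_mem hx
  have hper : Function.IsPeriodicPt f (b - a) (f^[a] x) := by
    rw [Function.IsPeriodicPt, Function.IsFixedPt, ← Function.iterate_add_apply,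
      Nat.sub_add_cancel hab.le, ← he]
  refine ⟨a, b - a, by omega, fun n hn => ?_⟩
  obtain ⟨t, rfl⟩ := Nat.exists_eq_add_of_le hn
  have := hper.apply_iterate t
  simp only [Function.IsPeriodicPt, Function.IsFixedPt, ← Function.iterate_add_apply] at this
  rwa [show a + t + (b - a) = b - a + (t + a) by omega, add_comm a]

lemma UltimatelyPeriodic.of_eq_imp {a : ℕ → α} {b : ℕ → β} (ha : UltimatelyPeriodic a)
    (hab : ∀ m n, a m = a n → b m = b n) : UltimatelyPeriodic b := by
  obtain ⟨N, r, hr, hper⟩ := ha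
  exact ⟨N, r, hr, fun n hn => hab _ _ (hper n hn)⟩

end UltimatelyPeriodic

/-- if the random orbit of a rational `x ∈ [c,1]` can avoid the switch
region, then `x` has a unique `c`-Lüroth expansion, which is ultimately periodic. -/
theorem unique_ultimately_periodic_expansion (c : ℝ) (hc : c ∈ Set.Icc (0:ℝ) (1/2))
    (x : ℝ) (hx : x ∈ Set.Icc c 1) (hxq : ∃ q : ℚ, (q : ℝ) = x)
    (hS : ∃ ω : ℕ → Bool, ∀ n : ℕ, Tom c ω n x ∉ SwitchS c) :
    (∀ ω₁ ω₂ : ℕ → Bool, expansion c ω₁ x = expansion c ω₂ x) ∧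
    (∀ ω : ℕ → Bool, UltimatelyPeriodic (expansion c ω x)) := by
  obtain ⟨hc0, hc2⟩ := hc
  obtain ⟨ω, hω⟩ := hS
  rcases hc0.eq_or_lt with rfl | hc
  · obtain ⟨n, hn⟩ := exists_Tom_zero_mem_switchS ω hx
    exact absurd hn (hω n)
  have hexp (ω' : ℕ → Bool) (m n : ℕ) (h : Tom c ω m x = Tom c ω n x) :
      expansion c ω' x m = expansion c ω x n := by
    rw [← Tom_eq_of_forall_not_mem_switchS hc hc2 hx hω ω'] at h
    exact expansion_eq_of_Tom_eq hc.ne' h (hω n)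
  refine ⟨fun ω₁ ω₂ => funext fun n => (hexp ω₁ n n rfl).trans (hexp ω₂ n n rfl).symm,
    fun ω' => ?_⟩
  obtain ⟨q, rfl⟩ := hxq
  have h1 : (1 : ℝ) ∈ AddSubgroup.zmultiples ((q.den : ℝ)⁻¹) :=
    ⟨q.den, by simp [zsmul_eq_mul, q.den_ne_zero]⟩
  have horbit (n : ℕ) : (Tc false c)^[n] q ∈
      (AddSubgroup.zmultiples ((q.den : ℝ)⁻¹) : Set ℝ) ∩ Icc 0 1 := by
    rw [← Tom_const_apply, Tom_eq_of_forall_not_mem_switchS hc hc2 hx hω]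
    exact ⟨Tom_mem_addSubgroup h1 c ω (rat_mem_zmultiples_inv_den q) n,
      Icc_subset_Icc_left hc0 (Tom_mem_Icc hc hc2 hx n)⟩
  refine (ultimatelyPeriodic_iterate_of_finite
    (finite_zmultiples_inter_Icc (by simp [q.den_pos])) horbit).of_eq_imp fun m n h => ?_
  simp only [← Tom_const_apply, Tom_eq_of_forall_not_mem_switchS hc hc2 hx hω] at h
  exact (hexp ω' m n h).trans (hexp ω' n n rfl).symm
end
end

section
/- Let 0 < p < 1. For every n ≥ 1 and every y ∈ (0,1], the m_p × λ measure of the set {(ω,x) ∈ {0,1}^ℕ × [0,1] : θ_n(ω,x) ≤ y} equals p·F_L(y) + (1−p)·F_A(y), where F_L(y) = Σ_{k=2}^{⌊1/y⌋+1} y/k + 1/(⌊1/y⌋+1) and F_A(y) = Σ_{k=2}^{⌊1/y⌋} y/(k−1) + 1/⌊1/y⌋. -/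
open MeasureTheory Filter Set
open scoped Classical ENNReal

noncomputable section

/-!
On each interval `(1/(k+2), 1/(k+1))` both maps `T_{0,0} = T_L` and `T_{1,0} = T_A` are affine
bijections onto `(0,1)` with slope `±(k+2)(k+1)`, so each of them preserves Lebesgue measure on
`[0,1]`. Hence the skew product `L₀` pushes `m_p × λ` forward to `(shift_* m_p) × λ`, and
`shift_* m_p` is again a Bernoulli `(p, 1-p)` measure. On the same intervals
`x - p₁/q₁ = (-1)^{s₁} T x / (d₁(d₁-1))`, which yields `θ_{n+1} = θ_n ∘ L₀` almost everywhere
and `θ₁ = T x / (d₁ - 1 + s₁)`. So every `θ_n` has the law of `θ₁`, computed branch by branch: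
the `k`-th branch contributes `min((k+1+s₁) y, 1) / ((k+2)(k+1))`, and these sums telescope to
`F_L` (`s₁ = 0`) and `F_A` (`s₁ = 1`).
-/

open MeasureTheory Set Function

lemma hasSum_one_div_add_two_mul_add_one (M : ℕ) :
    HasSum (fun n : ℕ => 1 / ((((n + M : ℕ) : ℝ) + 2) * (((n + M : ℕ) : ℝ) + 1)))
      (1 / ((M : ℝ) + 1)) := by
  set f : ℕ → ℝ := fun n => 1 / (((n + M : ℕ) : ℝ) + 1)
  have hf : Tendsto f atTop (nhds 0) :=
    (tendsto_one_div_add_atTop_nhds_zero_nat (𝕜 := ℝ)).comp (tendsto_add_atTop_nat M)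
  have hdiff (n : ℕ) :
      1 / ((((n + M : ℕ) : ℝ) + 2) * (((n + M : ℕ) : ℝ) + 1)) = f n - f (n + 1) := by
    simp only [f]; push_cast; field_simp; ring
  rw [hasSum_iff_tendsto_nat_of_nonneg (fun n => by positivity)]
  simp_rw [hdiff, Finset.sum_range_sub']
  simpa [f] using tendsto_const_nhds.sub hf

lemma hasSum_of_eq_one_div_add_two_mul_add_one {g : ℕ → ℝ} (M : ℕ)
    (hg : ∀ k, M ≤ k → g k = 1 / (((k : ℝ) + 2) * ((k : ℝ) + 1))) :
    HasSum g (∑ k ∈ Finset.range M, g k + 1 / ((M : ℝ) + 1)) := by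
  rw [← hasSum_nat_add_iff' M, add_sub_cancel_left]
  refine (hasSum_one_div_add_two_mul_add_one M).congr_fun fun n => ?_
  rw [hg _ (by omega)]

lemma tsum_ofReal_one_div_add_two_mul_add_one :
    ∑' k : ℕ, ENNReal.ofReal (1 / (((k : ℝ) + 2) * ((k : ℝ) + 1))) = 1 := by
  have h := hasSum_of_eq_one_div_add_two_mul_add_one 0 fun k _ => rfl
  rw [← ENNReal.ofReal_tsum_of_nonneg (fun k => by positivity) h.summable, h.tsum_eq]
  norm_num

lemma mul_le_one_iff_le_floor {y : ℝ} (hy : 0 < y) (n : ℕ) :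
    (n : ℝ) * y ≤ 1 ↔ n ≤ ⌊1 / y⌋₊ := by
  rw [Nat.le_floor_iff (by positivity), le_div_iff₀ hy]

lemma min_mul_one_of_floor_lt {y : ℝ} (hy : 0 < y) {n : ℕ} (hn : ⌊1 / y⌋₊ < n) :
    min ((n : ℝ) * y) 1 = 1 :=
  min_eq_right (le_of_lt (not_le.1 fun h => (mul_le_one_iff_le_floor hy n).1 h |>.not_gt hn))

lemma hasSum_FL {y : ℝ} (hy : 0 < y) :
    HasSum (fun k : ℕ => min (((k : ℝ) + 1) * y) 1 / (((k : ℝ) + 2) * ((k : ℝ) + 1)))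
      (FL y) := by
  set N := ⌊1 / y⌋₊
  convert hasSum_of_eq_one_div_add_two_mul_add_one N fun k hk => ?_ using 1
  · rw [FL, ← Finset.Ico_add_one_right_eq_Icc, Finset.sum_Ico_eq_sum_range,
      show N + 1 + 1 - 2 = N by omega]
    refine congrArg (· + _) (Finset.sum_congr rfl fun k hk => ?_)
    have hk : ((k + 1 : ℕ) : ℝ) * y ≤ 1 :=
      (mul_le_one_iff_le_floor hy _).2 (Finset.mem_range.1 hk)
    push_cast at hk ⊢
    rw [min_eq_left hk, add_comm 2]
    field_simp
  · have := min_mul_one_of_floor_lt hy (n := k + 1) (by omega)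
    push_cast at this
    rw [this]

lemma hasSum_FA {y : ℝ} (hy0 : 0 < y) (hy1 : y ≤ 1) :
    HasSum (fun k : ℕ => min (((k : ℝ) + 2) * y) 1 / (((k : ℝ) + 2) * ((k : ℝ) + 1)))
      (FA y) := by
  set N := ⌊1 / y⌋₊
  have hN : 1 ≤ N := (mul_le_one_iff_le_floor hy0 1).1 (by simpa using hy1)
  convert hasSum_of_eq_one_div_add_two_mul_add_one (N - 1) fun k hk => ?_ using 1
  · rw [FA, ← Finset.Ico_add_one_right_eq_Icc, Finset.sum_Ico_eq_sum_range,
      show N + 1 - 2 = N - 1 by omega, Nat.cast_sub hN, Nat.cast_one, sub_add_cancel]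
    refine congrArg (· + _) (Finset.sum_congr rfl fun k hk => ?_)
    have hk : ((k + 2 : ℕ) : ℝ) * y ≤ 1 :=
      (mul_le_one_iff_le_floor hy0 _).2 (by have := Finset.mem_range.1 hk; omega)
    push_cast at hk ⊢
    rw [min_eq_left hk, add_comm 2, show (k : ℝ) + 2 - 1 = k + 1 by ring]
    field_simp
  · have := min_mul_one_of_floor_lt hy0 (n := k + 2) (by omega)
    push_cast at this
    rw [this]

/-- On `branch k` the first digit is `k + 2`. -/
def branch (k : ℕ) : Set ℝ := Ioo (1 / ((k : ℝ) + 2)) (1 / ((k : ℝ) + 1))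

lemma measurableSet_branch (k : ℕ) : MeasurableSet (branch k) := measurableSet_Ioo

lemma branch_subset_Icc (k : ℕ) : branch k ⊆ Icc 0 1 := fun _ hx =>
  ⟨(hx.1.trans' (by positivity)).le,
    hx.2.le.trans (div_le_one_of_le₀ (by simp) (by positivity))⟩

lemma pairwise_disjoint_branch : Pairwise (Disjoint on branch) := by
  refine pairwise_disjoint_on _ |>.2 fun k l hkl => disjoint_left.2 fun x hk hl => ?_
  have : (1 : ℝ) / ((l : ℝ) + 1) ≤ 1 / ((k : ℝ) + 2) :=
    one_div_le_one_div_of_le (by positivity) (by norm_cast; omega)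
  exact (hl.2.trans_le this).not_gt hk.1

lemma exists_mem_branch_s10 {x : ℝ} (h0 : 0 < x) (h1 : x < 1)
    (hx : ∀ k : ℕ, x ≠ 1 / ((k : ℝ) + 1)) : ∃ k, x ∈ branch k := by
  obtain ⟨k, hk⟩ : ∃ k, ⌊1 / x⌋₊ = k + 1 :=
    Nat.exists_eq_add_one.2 (Nat.floor_pos.2 (one_le_one_div h0 h1.le))
  have hle : (k : ℝ) + 1 ≤ 1 / x := by exact_mod_cast hk ▸ Nat.floor_le (by positivity)
  have hlt : 1 / x < (k : ℝ) + 2 := by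
    have := Nat.lt_floor_add_one (1 / x); rw [hk] at this; push_cast at this; linarith
  have hne : (k : ℝ) + 1 ≠ 1 / x := fun h => hx k (by rw [h, one_div_one_div])
  exact ⟨k, (one_div_lt (by positivity) h0).2 hlt,
    (lt_one_div h0 (by positivity)).2 (lt_of_le_of_ne hle hne)⟩

lemma Icc_ae_eq_iUnion_branch : (Icc 0 1 : Set ℝ) =ᵐ[volume] ⋃ k, branch k := by
  have hE : ({0} ∪ range fun k : ℕ => 1 / ((k : ℝ) + 1)).Countable :=
    (countable_singleton 0).union (countable_range _)
  filter_upwards [hE.ae_notMem volume] with x hx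
  simp only [mem_union, mem_singleton_iff, mem_range, not_or, not_exists] at hx
  refine propext ⟨fun hI => mem_iUnion.2 ?_, fun h => ?_⟩
  · refine exists_mem_branch_s10 (hI.1.lt_of_ne' hx.1) (hI.2.lt_of_ne ?_) fun k h => hx.2 k h.symm
    rintro rfl; exact hx.2 0 (by norm_num)
  · obtain ⟨k, hk⟩ := mem_iUnion.1 h
    exact branch_subset_Icc k hk

lemma restrict_Icc_apply_eq_tsum_branch (S : Set ℝ) :
    volume.restrict (Icc (0 : ℝ) 1) S = ∑' k, volume (S ∩ branch k) := by
  rw [Measure.restrict_congr_set Icc_ae_eq_iUnion_branch,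
    Measure.restrict_iUnion pairwise_disjoint_branch measurableSet_branch,
    Measure.sum_apply_of_countable]
  simp only [Measure.restrict_apply' (measurableSet_branch _)]

lemma ae_exists_mem_branch : ∀ᵐ x ∂volume.restrict (Icc (0 : ℝ) 1), ∃ k, x ∈ branch k := by
  rw [Measure.restrict_congr_set Icc_ae_eq_iUnion_branch]
  filter_upwards [ae_restrict_mem (MeasurableSet.iUnion measurableSet_branch)] with x hx
  exact mem_iUnion.1 hx

lemma measurable_TL : Measurable TL := by
  unfold TL
  refine Measurable.ite (measurableSet_singleton 0) measurable_const
    (Measurable.ite (measurableSet_singleton 1) measurable_const ?_)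
  fun_prop

lemma measurable_Tc_uncurry : Measurable fun q : Bool × ℝ => Tc q.1 0 q.2 := by
  refine measurable_from_prod_countable_right fun j => ?_
  refine Measurable.ite ?_ measurable_const (Measurable.ite (measurableSet_singleton 1)
    measurable_const (Measurable.ite ?_ (measurable_const.sub measurable_TL) measurable_TL))
  all_goals simp only [ofPred_or, ofPred_and, ofPred_exists]; measurability

lemma measurable_Tc (j : Bool) : Measurable (Tc j 0) :=
  measurable_Tc_uncurry.comp (measurable_const.prodMk measurable_id)

lemma measurable_Tom (n : ℕ) : Measurable fun q : (ℕ → Bool) × ℝ => Tom 0 q.1 n q.2 := by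
  induction n with
  | zero => exact measurable_snd
  | succ n ih =>
    exact measurable_Tc_uncurry.comp ((measurable_pi_apply n).comp measurable_fst |>.prodMk ih)

lemma measurable_theta (n : ℕ) : Measurable fun q : (ℕ → Bool) × ℝ => theta q.1 q.2 n := by
  have hdig (i : ℕ) : Measurable fun q : (ℕ → Bool) × ℝ => dig 0 q.1 q.2 i := by
    have := measurable_Tom i
    exact Measurable.ite (measurableSet_eq_fun this measurable_const) measurable_const
      (by fun_prop)
  have hsgn (i : ℕ) : Measurable fun q : (ℕ → Bool) × ℝ => sgn 0 q.1 q.2 i := by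
    simp only [sgn, if_true]
    exact (measurable_of_countable fun b : Bool => if b then 1 else 0).comp
      ((measurable_pi_apply i).comp measurable_fst)
  unfold theta conv
  fun_prop

lemma measurable_L0 : Measurable L0 := by
  have := measurable_Tc_uncurry
  unfold L0
  fun_prop

/-- With `d = k + 2`, this is `T_L x = d(d-1)x - (d-1)` for `j = false` and
`T_A x = d - d(d-1)x` for `j = true`. -/
def branchMap (j : Bool) (k : ℕ) (x : ℝ) : ℝ :=
  (-1) ^ j.toNat * (((k : ℝ) + 2) * ((k : ℝ) + 1) * x - ((k : ℝ) + 1 + j.toNat))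

lemma ceil_one_div_of_mem_branch {x : ℝ} {k : ℕ} (hx : x ∈ branch k) :
    ⌈1 / x⌉ = (k : ℤ) + 2 := by
  have hx0 : 0 < x := hx.1.trans' (by positivity)
  rw [Int.ceil_eq_iff]
  push_cast
  constructor
  · have := (lt_one_div (by positivity) hx0).2 hx.2; linarith
  · exact (one_div_le hx0 (by positivity)).2 hx.1.le

lemma Tc_zero_of_mem_branch (j : Bool) {x : ℝ} {k : ℕ} (hx : x ∈ branch k) :
    Tc j 0 x = branchMap j k x := by
  have hx0 : 0 < x := hx.1.trans' (by positivity)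
  have hx1 : x < 1 := hx.2.trans_le (div_le_one_of_le₀ (by simp) (by positivity))
  have hne (n : ℕ) : x ≠ 1 / n := by
    rintro rfl
    have hn : (0 : ℝ) < n := by simpa using hx0
    have h1 : (n : ℝ) < (k : ℝ) + 2 := lt_of_one_div_lt_one_div (by positivity) hx.1
    have h2 : (k : ℝ) + 1 < n := lt_of_one_div_lt_one_div hn hx.2
    norm_cast at h1 h2; omega
  have hTL : TL x = ((k : ℝ) + 2) * ((k : ℝ) + 1) * x - ((k : ℝ) + 1) := by
    rw [TL, if_neg hx0.ne', if_neg hx1.ne, ceil_one_div_of_mem_branch hx]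
    push_cast; ring
  have hL : ¬ ∃ n : ℕ, 2 ≤ n ∧ 1 / (n : ℝ) ≤ x ∧ x < zp 0 n := by
    rintro ⟨n, -, hle, hlt⟩
    simp only [zp, zero_mul, add_zero] at hlt
    exact hlt.not_ge hle
  have hA : ∃ n : ℕ, 2 ≤ n ∧ 1 / (n : ℝ) ≤ x ∧ x ≤ zm 0 (n - 1) :=
    ⟨k + 2, by omega, by exact_mod_cast hx.1.le, by simpa [zm] using hx.2.le⟩
  rw [Tc, if_neg (by rintro ⟨-, rfl | ⟨n, -, h⟩⟩; exacts [hx0.ne' rfl, hne n h]),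
    if_neg hx1.ne]
  cases j
  · rw [if_neg fun h => h.elim (fun h => hL h.2) fun h => Bool.false_ne_true h.1, hTL,
      branchMap]
    simp
  · rw [if_pos (Or.inr ⟨rfl, hA⟩), TA, hTL, branchMap]
    simp only [Bool.toNat_true, Nat.cast_one, pow_one, neg_one_mul]
    ring

lemma preimage_branchMap_Ioo (j : Bool) (k : ℕ) : branchMap j k ⁻¹' Ioo 0 1 = branch k := by
  ext x
  have h1 : (0 : ℝ) < (k : ℝ) + 1 := by positivity
  have h2 : (0 : ℝ) < (k : ℝ) + 2 := by positivity
  simp only [branch, mem_preimage, mem_Ioo, branchMap, div_lt_iff₀ h2, lt_div_iff₀ h1]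
  cases j <;>
    simp only [Bool.toNat_false, Bool.toNat_true, Nat.cast_zero, Nat.cast_one, pow_zero, pow_one,
      add_zero, one_mul, neg_mul, neg_sub, sub_pos] <;>
    constructor <;> rintro ⟨ha, hb⟩ <;> constructor <;> nlinarith

lemma volume_preimage_branchMap (j : Bool) (k : ℕ) (S : Set ℝ) :
    volume (branchMap j k ⁻¹' S) =
      ENNReal.ofReal (1 / (((k : ℝ) + 2) * ((k : ℝ) + 1))) * volume S := by
  set a : ℝ := (-1) ^ j.toNat * (((k : ℝ) + 2) * ((k : ℝ) + 1))
  have ha : a ≠ 0 := mul_ne_zero (pow_ne_zero _ (by norm_num)) (by positivity)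
  have ha' : |a⁻¹| = 1 / (((k : ℝ) + 2) * ((k : ℝ) + 1)) := by
    rw [abs_inv, abs_mul, abs_pow, abs_neg, abs_one, one_pow, one_mul, abs_of_pos (by positivity),
      one_div]
  have hmap : branchMap j k =
      (· + -((-1) ^ j.toNat * ((k : ℝ) + 1 + j.toNat))) ∘ (a * ·) := by
    ext x; simp only [branchMap, a, Function.comp]; ring
  rw [hmap, preimage_comp, Real.volume_preimage_mul_left ha, measure_preimage_add_right, ha']

lemma volume_branch_inter_preimage_branchMap (j : Bool) (k : ℕ) (S : Set ℝ) :
    volume (branch k ∩ branchMap j k ⁻¹' S) =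
      ENNReal.ofReal (1 / (((k : ℝ) + 2) * ((k : ℝ) + 1))) * volume.restrict (Icc 0 1) S := by
  rw [← preimage_branchMap_Ioo j, ← preimage_inter, volume_preimage_branchMap,
    ← Measure.restrict_congr_set Ioo_ae_eq_Icc, Measure.restrict_apply' measurableSet_Ioo,
    inter_comm]

lemma measurePreserving_Tc (j : Bool) :
    MeasurePreserving (Tc j 0) (volume.restrict (Icc 0 1)) (volume.restrict (Icc 0 1)) := by
  refine ⟨measurable_Tc j, Measure.ext fun S hS => ?_⟩
  have hbranch (k : ℕ) : Tc j 0 ⁻¹' S ∩ branch k = branch k ∩ branchMap j k ⁻¹' S := by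
    ext x
    simp only [mem_inter_iff, mem_preimage]
    exact ⟨fun ⟨h, hx⟩ => ⟨hx, Tc_zero_of_mem_branch j hx ▸ h⟩,
      fun ⟨hx, h⟩ => ⟨(Tc_zero_of_mem_branch j hx).symm ▸ h, hx⟩⟩
  rw [Measure.map_apply (measurable_Tc j) hS, restrict_Icc_apply_eq_tsum_branch]
  simp_rw [hbranch, volume_branch_inter_preimage_branchMap, ENNReal.tsum_mul_right,
    tsum_ofReal_one_div_add_two_mul_add_one, one_mul]

def seqTail {α : Type*} (ω : ℕ → α) : ℕ → α := fun n => ω (n + 1)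

section Shift

variable (c : ℝ) (ω : ℕ → Bool) (x : ℝ)

lemma Tom_succ' (n : ℕ) : Tom c ω (n + 1) x = Tom c (seqTail ω) n (Tc (ω 0) c x) := by
  induction n with
  | zero => rfl
  | succ n ih => exact congrArg (Tc (ω (n + 1)) c) ih

lemma dig_succ' (n : ℕ) : dig c ω x (n + 1) = dig c (seqTail ω) (Tc (ω 0) c x) n := by
  simp only [dig, Tom_succ']

lemma sgn_succ' (n : ℕ) : sgn c ω x (n + 1) = sgn c (seqTail ω) (Tc (ω 0) c x) n := by
  simp only [sgn, Tom_succ']; rfl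

lemma conv_one : conv c ω x 1 = ((dig c ω x 0 : ℝ) - 1 + sgn c ω x 0) /
    ((dig c ω x 0 : ℝ) * ((dig c ω x 0 : ℝ) - 1)) := by
  simp [conv]

lemma conv_succ' (n : ℕ) : conv c ω x (n + 1) = conv c ω x 1 +
    (-1) ^ sgn c ω x 0 / ((dig c ω x 0 : ℝ) * ((dig c ω x 0 : ℝ) - 1)) *
      conv c (seqTail ω) (Tc (ω 0) c x) n := by
  rw [conv, Finset.sum_range_succ', add_comm, conv_one, conv, Finset.mul_sum]
  congr 1
  · simp
  · refine Finset.sum_congr rfl fun i _ => ?_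
    rw [Finset.sum_range_succ', Finset.prod_range_succ']
    simp only [dig_succ', sgn_succ', pow_add, div_eq_mul_inv, mul_inv]
    ring

end Shift

lemma sgn_zero (ω : ℕ → Bool) (x : ℝ) (n : ℕ) : sgn 0 ω x n = (ω n).toNat := by
  simp only [sgn, if_true]; cases ω n <;> rfl

lemma dig_zero_of_mem_branch (c : ℝ) (ω : ℕ → Bool) {x : ℝ} {k : ℕ} (hx : x ∈ branch k) :
    dig c ω x 0 = k + 2 := by
  have hx1 : x ≠ 1 := (hx.2.trans_le (div_le_one_of_le₀ (by simp) (by positivity))).ne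
  rw [dig, show Tom c ω 0 x = x from rfl, if_neg hx1]
  exact (congrArg Int.toNat (ceil_one_div_of_mem_branch hx)).trans (by omega)

lemma sub_conv_one_of_mem_branch (ω : ℕ → Bool) {x : ℝ} {k : ℕ} (hx : x ∈ branch k) :
    x - conv 0 ω x 1 =
      (-1) ^ (ω 0).toNat * Tc (ω 0) 0 x / (((k : ℝ) + 2) * ((k : ℝ) + 1)) := by
  rw [conv_one, dig_zero_of_mem_branch 0 ω hx, sgn_zero, Tc_zero_of_mem_branch _ hx, branchMap]
  push_cast
  rw [show (k : ℝ) + 2 - 1 = k + 1 by ring]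
  cases ω 0 <;>
    simp only [Bool.toNat_false, Bool.toNat_true, Nat.cast_zero, Nat.cast_one, pow_zero, pow_one,
      add_zero, one_mul, neg_one_mul] <;>
    field_simp

lemma theta_succ_of_mem_branch (ω : ℕ → Bool) {x : ℝ} {k : ℕ} (hx : x ∈ branch k) {n : ℕ}
    (hn : 1 ≤ n) : theta ω x (n + 1) = theta (seqTail ω) (Tc (ω 0) 0 x) n := by
  obtain ⟨n, rfl⟩ := Nat.exists_eq_add_of_le' hn
  set D : ℝ := ((k : ℝ) + 2) * ((k : ℝ) + 1)
  have hD : 0 < D := by positivity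
  have hdiff : x - conv 0 ω x (n + 1 + 1) = (-1) ^ (ω 0).toNat / D *
      (Tc (ω 0) 0 x - conv 0 (seqTail ω) (Tc (ω 0) 0 x) (n + 1)) := by
    rw [conv_succ', ← sub_sub, sub_conv_one_of_mem_branch ω hx, dig_zero_of_mem_branch 0 ω hx,
      sgn_zero]
    push_cast
    ring
  simp only [theta, Nat.add_sub_cancel, Finset.prod_range_succ', dig_succ', sgn_succ', hdiff,
    abs_mul, abs_div, abs_pow, abs_neg, abs_one, one_pow, dig_zero_of_mem_branch 0 ω hx]
  push_cast
  rw [abs_of_pos hD]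
  field_simp
  ring

lemma theta_one_of_mem_branch (ω : ℕ → Bool) {x : ℝ} {k : ℕ} (hx : x ∈ branch k) :
    theta ω x 1 = Tc (ω 0) 0 x / ((k : ℝ) + 1 + (ω 0).toNat) := by
  have hT : 0 < Tc (ω 0) 0 x := by
    rw [Tc_zero_of_mem_branch _ hx]
    exact ((preimage_branchMap_Ioo (ω 0) k).symm ▸ hx : x ∈ branchMap (ω 0) k ⁻¹' Ioo 0 1).1
  rw [theta, Nat.sub_self, Finset.prod_range_zero, mul_one, sub_conv_one_of_mem_branch ω hx,
    dig_zero_of_mem_branch 0 ω hx, sgn_zero, abs_div, abs_mul, abs_pow, abs_neg, abs_one, one_pow,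
    one_mul, abs_of_pos hT, abs_of_pos (by positivity)]
  push_cast
  have hs : ((k : ℝ) + 2 - (ω 0).toNat) * ((k : ℝ) + 1 + (ω 0).toNat) =
      ((k : ℝ) + 2) * ((k : ℝ) + 1) := by
    cases ω 0 <;>
      simp only [Bool.toNat_false, Bool.toNat_true, Nat.cast_zero, Nat.cast_one] <;> ring
  field_simp
  exact hs

lemma restrict_Icc_Iic (c : ℝ) :
    volume.restrict (Icc (0 : ℝ) 1) (Iic c) = ENNReal.ofReal (min c 1) := by
  have hI : Iic c ∩ Icc 0 1 = Icc 0 (min c 1) := by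
    ext; simp only [mem_inter_iff, mem_Iic, mem_Icc, le_min_iff]; tauto
  rw [Measure.restrict_apply' measurableSet_Icc, hI, Real.volume_Icc, sub_zero]

lemma restrict_Icc_theta_one_le (ω : ℕ → Bool) {y : ℝ} (hy0 : 0 < y) (hy1 : y ≤ 1) :
    volume.restrict (Icc (0 : ℝ) 1) {x | theta ω x 1 ≤ y} =
      ENNReal.ofReal (if ω 0 then FA y else FL y) := by
  set w : ℕ → ℝ := fun k => (k : ℝ) + 1 + (ω 0).toNat
  have hslice (k : ℕ) : {x | theta ω x 1 ≤ y} ∩ branch k =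
      branch k ∩ branchMap (ω 0) k ⁻¹' Iic (w k * y) := by
    ext x
    simp only [mem_inter_iff, mem_ofPred_eq, mem_preimage, mem_Iic]
    refine ⟨fun ⟨h, hx⟩ => ⟨hx, ?_⟩, fun ⟨hx, h⟩ => ⟨?_, hx⟩⟩ <;>
      rw [theta_one_of_mem_branch ω hx, Tc_zero_of_mem_branch _ hx,
        div_le_iff₀ (by positivity)] at * <;>
      linarith
  have hsum : HasSum (fun k => min (w k * y) 1 / (((k : ℝ) + 2) * ((k : ℝ) + 1)))
      (if ω 0 then FA y else FL y) := by
    cases hω : ω 0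
    · simpa [w, hω] using hasSum_FL hy0
    · simpa [w, hω, add_assoc, one_add_one_eq_two] using hasSum_FA hy0 hy1
  rw [restrict_Icc_apply_eq_tsum_branch, ← hsum.tsum_eq,
    ENNReal.ofReal_tsum_of_nonneg (fun k => by positivity) hsum.summable]
  refine tsum_congr fun k => ?_
  rw [hslice, volume_branch_inter_preimage_branchMap, restrict_Icc_Iic,
    ← ENNReal.ofReal_mul (by positivity), one_div_mul_eq_div]

lemma measurable_seqTail {α : Type*} [MeasurableSpace α] :
    Measurable (seqTail : (ℕ → α) → ℕ → α) :=
  measurable_pi_lambda _ fun n => measurable_pi_apply (n + 1)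

lemma measurableSet_cylinder (n : ℕ) (f : Fin n → Bool) :
    MeasurableSet {ω : ℕ → Bool | ∀ i : Fin n, ω i = f i} := by
  simp only [ofPred_forall]
  exact MeasurableSet.iInter fun i => measurableSet_eq_fun (measurable_pi_apply _) measurable_const

lemma seqTail_preimage_cylinder (n : ℕ) (f : Fin n → Bool) :
    seqTail ⁻¹' {ω : ℕ → Bool | ∀ i : Fin n, ω i = f i} =
      ⋃ b : Bool, {ω | ∀ i : Fin (n + 1), ω i = (Fin.cons b f : Fin (n + 1) → Bool) i} := by
  ext ω
  simp [Fin.forall_fin_succ, seqTail]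

namespace IsBernoulli

variable {p : ℝ} {m : Measure (ℕ → Bool)}

lemma measure_head_eq (hm : IsBernoulli p m) (b : Bool) :
    m {ω | ω 0 = b} = ENNReal.ofReal (if b then 1 - p else p) := by
  simpa using hm.2 1 fun _ => b

lemma lintegral_comp_head (hm : IsBernoulli p m) (f : Bool → ℝ≥0∞) :
    ∫⁻ ω, f (ω 0) ∂m = ENNReal.ofReal p * f false + ENNReal.ofReal (1 - p) * f true := by
  rw [← lintegral_map (measurable_of_countable f) (measurable_pi_apply 0), lintegral_fintype,
    Fintype.sum_bool, Measure.map_apply (measurable_pi_apply 0) (measurableSet_singleton _),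
    Measure.map_apply (measurable_pi_apply 0) (measurableSet_singleton _)]
  simp only [preimage, mem_singleton_iff, hm.measure_head_eq, if_true, Bool.false_eq_true,
    if_false]
  ring

lemma mem_Icc (hm : IsBernoulli p m) : p ∈ Icc 0 1 := by
  have := hm.1
  have h : ENNReal.ofReal p + ENNReal.ofReal (1 - p) = 1 := by
    simpa using (hm.lintegral_comp_head fun _ => 1).symm
  exact ⟨by linarith [ENNReal.ofReal_le_one.1 (h ▸ le_add_self)],
    ENNReal.ofReal_le_one.1 (h ▸ le_self_add)⟩

lemma map_seqTail (hm : IsBernoulli p m) : IsBernoulli p (m.map seqTail) := by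
  have := hm.1
  refine ⟨Measure.isProbabilityMeasure_map measurable_seqTail.aemeasurable, fun n f => ?_⟩
  rw [Measure.map_apply measurable_seqTail (measurableSet_cylinder n f), seqTail_preimage_cylinder,
    measure_iUnion ?_ fun b => measurableSet_cylinder _ _, tsum_fintype, Fintype.sum_bool]
  · simp only [hm.2, Fin.prod_univ_succ, Fin.cons_zero, Fin.cons_succ, if_true,
      Bool.false_eq_true, if_false]
    rw [← add_mul, ← ENNReal.ofReal_add (by linarith [hm.mem_Icc.2]) hm.mem_Icc.1]
    simp
  · intro b b' hbb'
    refine disjoint_left.2 fun ω h h' => hbb' ?_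
    simpa using (h 0).symm.trans (h' 0)

end IsBernoulli

lemma map_L0_prod (m : Measure (ℕ → Bool)) [SFinite m] :
    (m.prod (volume.restrict (Icc (0 : ℝ) 1))).map L0 =
      (m.map seqTail).prod (volume.restrict (Icc (0 : ℝ) 1)) := by
  ext S hS
  rw [Measure.map_apply measurable_L0 hS, Measure.prod_apply (measurable_L0 hS),
    Measure.prod_apply hS, lintegral_map (measurable_measure_prodMk_left hS) measurable_seqTail]
  exact lintegral_congr fun ω =>
    (measurePreserving_Tc (ω 0)).measure_preimage (s := Prod.mk (seqTail ω) ⁻¹' S)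
      (measurable_prodMk_left hS).nullMeasurableSet

lemma ae_theta_succ_eq (m : Measure (ℕ → Bool)) [SFinite m] {n : ℕ} (hn : 1 ≤ n) :
    ∀ᵐ q ∂m.prod (volume.restrict (Icc (0 : ℝ) 1)),
      theta q.1 q.2 (n + 1) = theta (L0 q).1 (L0 q).2 n := by
  filter_upwards [Measure.quasiMeasurePreserving_snd.ae ae_exists_mem_branch] with q ⟨k, hk⟩
  exact theta_succ_of_mem_branch q.1 hk hn

lemma measure_theta_one_le {p : ℝ} {m : Measure (ℕ → Bool)} (hm : IsBernoulli p m) {y : ℝ}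
    (hy0 : 0 < y) (hy1 : y ≤ 1) :
    (m.prod (volume.restrict (Icc (0 : ℝ) 1))) {q | theta q.1 q.2 1 ≤ y} =
      ENNReal.ofReal (p * FL y + (1 - p) * FA y) := by
  have := hm.1
  have hFL : 0 ≤ FL y := (hasSum_FL hy0).nonneg fun k => by positivity
  have hFA : 0 ≤ FA y := (hasSum_FA hy0 hy1).nonneg fun k => by positivity
  obtain ⟨hp0, hp1⟩ := hm.mem_Icc
  rw [Measure.prod_apply (measurableSet_le (measurable_theta 1) measurable_const)]
  refine (lintegral_congr fun ω => restrict_Icc_theta_one_le ω hy0 hy1).trans ?_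
  rw [hm.lintegral_comp_head fun b => ENNReal.ofReal (if b then FA y else FL y)]
  simp only [if_true, Bool.false_eq_true, if_false]
  rw [← ENNReal.ofReal_mul hp0, ← ENNReal.ofReal_mul (by linarith),
    ← ENNReal.ofReal_add (mul_nonneg hp0 hFL) (mul_nonneg (by linarith) hFA)]

theorem theta_distribution_general (p : ℝ)
    (m : Measure (ℕ → Bool)) (hm : IsBernoulli p m)
    (n : ℕ) (hn : 1 ≤ n) (y : ℝ) (hy : y ∈ Set.Ioc (0:ℝ) 1) :
    (m.prod (volume.restrict (Set.Icc (0:ℝ) 1)))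
        {q : (ℕ → Bool) × ℝ | theta q.1 q.2 n ≤ y}
      = ENNReal.ofReal (p * FL y + (1 - p) * FA y) := by
  induction n, hn using Nat.le_induction generalizing m with
  | base => exact measure_theta_one_le hm hy.1 hy.2
  | succ n hn ih =>
    have := hm.1
    calc _ = (m.prod (volume.restrict (Icc (0 : ℝ) 1))) (L0 ⁻¹' {q | theta q.1 q.2 n ≤ y}) :=
          measure_congr <| eventuallyEq_set.2 <| (ae_theta_succ_eq m hn).mono fun q hq => by
            simp only [mem_ofPred_eq, mem_preimage, hq]
      _ = ((m.map seqTail).prod (volume.restrict (Icc (0 : ℝ) 1)))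
            {q | theta q.1 q.2 n ≤ y} := by
          rw [← Measure.map_apply measurable_L0
            (measurableSet_le (measurable_theta n) measurable_const), map_L0_prod]
      _ = _ := ih _ hm.map_seqTail

/-- the distribution function of the approximation coefficient `θ_n`
under `m_p × λ` is `p·F_L + (1−p)·F_A`. -/
theorem theta_distribution (p : ℝ) (hp0 : 0 < p) (hp1 : p < 1)
    (m : Measure (ℕ → Bool)) (hm : IsBernoulli p m)
    (n : ℕ) (hn : 1 ≤ n) (y : ℝ) (hy : y ∈ Set.Ioc (0:ℝ) 1) :
    (m.prod (volume.restrict (Set.Icc (0:ℝ) 1)))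
        {q : (ℕ → Bool) × ℝ | theta q.1 q.2 n ≤ y}
      = ENNReal.ofReal (p * FL y + (1 - p) * FA y) :=
  theta_distribution_general p m hm n hn y hy
end
end
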